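/- Under the same setup (v ~ N(p₀, σv²), u ~ N(0, σu²), ε ~ N(0, σε²) independent, x = β(v − p₀), p = p₀ + λ(x + u + ε), with β = √(σu² + σε²)/σv and λ = σv/(2√(σu² + σε²))), the noise traders' expected P&L satisfies E[(v − p)·u] = −σv·σu²/(2√(σu² + σε²)). -/

import Mathlib

/-!
Since `p - p₀ = λ (β (v - p₀) + u + ε)`, the P&L `(v - p) u` is a linear combination of
`(v - p₀) u`, `u²` and `ε u`. Independence and `E[u] = 0` kill the two cross terms, so only
`-λ E[u²] = -λ σu²` survives.
-/

open MeasureTheory ProbabilityTheory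
open scoped NNReal ENNReal

section GaussianMoments

variable {Ω : Type*} [MeasurableSpace Ω] {P : Measure Ω} {X : Ω → ℝ} {μ : ℝ} {v : ℝ≥0}

lemma hasLaw_of_map_eq_gaussianReal (h : P.map X = gaussianReal μ v) :
    HasLaw X (gaussianReal μ v) P :=
  ⟨.of_map_ne_zero (by simp [h, NeZero.ne]), h⟩

namespace ProbabilityTheory.HasLaw

lemma memLp_of_gaussianReal (hX : HasLaw X (gaussianReal μ v) P) {p : ℝ≥0∞} (hp : p ≠ ∞) :
    MemLp X p P := by
  have h := memLp_map_measure_iff (p := p) aestronglyMeasurable_id hX.aemeasurable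
  rw [hX.map_eq] at h
  exact h.mp (memLp_id_gaussianReal' p hp)

lemma integrable_of_gaussianReal (hX : HasLaw X (gaussianReal μ v) P) : Integrable X P :=
  memLp_one_iff_integrable.mp (hX.memLp_of_gaussianReal ENNReal.one_ne_top)

lemma integral_of_gaussianReal (hX : HasLaw X (gaussianReal μ v) P) : P[X] = μ := by
  simpa using hX.integral_comp (f := id) aestronglyMeasurable_id

lemma variance_of_gaussianReal (hX : HasLaw X (gaussianReal μ v) P) : Var[X; P] = v := by
  rw [← variance_id_gaussianReal (μ := μ), ← hX.map_eq,
    variance_map aemeasurable_id hX.aemeasurable]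
  rfl

end ProbabilityTheory.HasLaw

lemma integral_linear_comb_mul_eq_mul_variance [IsFiniteMeasure P] {X Y Z : Ω → ℝ}
    (hX : Integrable X P) (hY : MemLp Y 2 P) (hZ : Integrable Z P)
    (hXY : IndepFun X Y P) (hZY : IndepFun Z Y P) (hY0 : P[Y] = 0) (a b c : ℝ) :
    ∫ ω, (a * X ω + b * Y ω + c * Z ω) * Y ω ∂P = b * Var[Y; P] := by
  have hYi : Integrable Y P := hY.integrable one_le_two
  have hXY0 : ∫ ω, X ω * Y ω ∂P = 0 := by
    rw [hXY.integral_fun_mul_eq_mul_integral hX.1 hYi.1, hY0, mul_zero]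
  have hZY0 : ∫ ω, Z ω * Y ω ∂P = 0 := by
    rw [hZY.integral_fun_mul_eq_mul_integral hZ.1 hYi.1, hY0, mul_zero]
  have hXYi : Integrable (fun ω => a * (X ω * Y ω)) P := (hXY.integrable_mul hX hYi).const_mul a
  have hYYi : Integrable (fun ω => b * Y ω ^ 2) P := hY.integrable_sq.const_mul b
  have hZYi : Integrable (fun ω => c * (Z ω * Y ω)) P := (hZY.integrable_mul hZ hYi).const_mul c
  calc ∫ ω, (a * X ω + b * Y ω + c * Z ω) * Y ω ∂P
      = ∫ ω, (a * (X ω * Y ω) + b * Y ω ^ 2 + c * (Z ω * Y ω)) ∂P := by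
        congr 1; ext ω; ring
    _ = a * ∫ ω, X ω * Y ω ∂P + b * ∫ ω, Y ω ^ 2 ∂P + c * ∫ ω, Z ω * Y ω ∂P := by
        have hXYYi : Integrable (fun ω => a * (X ω * Y ω) + b * Y ω ^ 2) P := hXYi.add hYYi
        rw [integral_add hXYYi hZYi, integral_add hXYi hYYi, integral_const_mul,
          integral_const_mul, integral_const_mul]
    _ = b * Var[Y; P] := by
        rw [hXY0, hZY0, variance_of_integral_eq_zero hY.aemeasurable hY0]; ring

end GaussianMoments

/-- Noise traders' equilibrium expected P&L in the Kyle model with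
Gaussian privacy noise. -/
theorem stmt_5 {Ω : Type*} [MeasurableSpace Ω] (P : Measure Ω) [IsProbabilityMeasure P]
    (v u ε : Ω → ℝ) (p₀ σv σu σε : ℝ)
    (hvd : P.map v = gaussianReal p₀ ⟨σv ^ 2, by positivity⟩)
    (hud : P.map u = gaussianReal 0 ⟨σu ^ 2, by positivity⟩)
    (hed : P.map ε = gaussianReal 0 ⟨σε ^ 2, by positivity⟩)
    (hindep : iIndepFun ![v, u, ε] P)
    (β lam : ℝ)
    (hlam : lam = σv / (2 * Real.sqrt (σu ^ 2 + σε ^ 2)))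
    (x p : Ω → ℝ)
    (hx : ∀ ω, x ω = β * (v ω - p₀))
    (hp : ∀ ω, p ω = p₀ + lam * (x ω + u ω + ε ω)) :
    ∫ ω, (v ω - p ω) * u ω ∂P
      = -(σv * σu ^ 2 / (2 * Real.sqrt (σu ^ 2 + σε ^ 2))) := by
  have hvL := hasLaw_of_map_eq_gaussianReal hvd
  have huL := hasLaw_of_map_eq_gaussianReal hud
  have hεL := hasLaw_of_map_eq_gaussianReal hed
  have hvu : IndepFun (fun ω => v ω - p₀) u P :=
    (hindep.indepFun (i := 0) (j := 1) (by decide)).comp (measurable_id.sub_const p₀) measurable_id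
  have hεu : IndepFun ε u P := hindep.indepFun (i := 2) (j := 1) (by decide)
  have hsplit : ∀ ω, (v ω - p ω) * u ω
      = ((1 - lam * β) * (v ω - p₀) + -lam * u ω + -lam * ε ω) * u ω := by
    intro ω; rw [hp, hx]; ring
  rw [integral_congr_ae (ae_of_all _ hsplit),
    integral_linear_comb_mul_eq_mul_variance (X := fun ω => v ω - p₀)
      (hvL.integrable_of_gaussianReal.sub (integrable_const p₀))
      (huL.memLp_of_gaussianReal ENNReal.ofNat_ne_top)
      hεL.integrable_of_gaussianReal
      hvu hεu huL.integral_of_gaussianReal,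
    huL.variance_of_gaussianReal]
  change -lam * σu ^ 2 = _
  rw [hlam]
  ring
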